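/- Let ω ∈ Ω and let C∞ be an infinite contour of φ(ω). Let G∖C∞ be the graph obtained from G by removing all edges of G crossed by edges of C∞. Then every infinite connected component of G∖C∞ contains an infinite cluster of ω that is incident to C∞. -/

import Mathlib

open scoped Classical ENNReal
open MeasureTheory

noncomputable section

namespace CP

/-! ### Site configurations and clusters on the square lattice `G = ℤ²`.
States `0` / `1` are encoded as `false` / `true`. -/

abbrev Config := ℤ × ℤ → Bool

/-- Adjacency in the square lattice `G` on `ℤ²` (ℓ¹-distance one). -/
def ZAdj (u v : ℤ × ℤ) : Prop := |u.1 - v.1| + |u.2 - v.2| = 1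

/-- The hard local constraint: around each black face (lower-left corner `(m,n)` with
`m + n` even), the corners read clockwise from the lower-left corner form one of the
words `0000, 1111, 0011, 1100, 0110, 1001`; equivalently, the two vertical sides are
each monochromatic, or the two horizontal sides are each monochromatic. -/
def Constrained (ω : Config) : Prop :=
  ∀ m n : ℤ, Even (m + n) →
    ((ω (m, n) = ω (m, n + 1) ∧ ω (m + 1, n) = ω (m + 1, n + 1)) ∨
     (ω (m, n) = ω (m + 1, n) ∧ ω (m, n + 1) = ω (m + 1, n + 1)))

/-- `u` and `v` are joined by a path of vertices all having the same state. -/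
def SameCluster (ω : Config) (u v : ℤ × ℤ) : Prop :=
  Relation.ReflTransGen (fun a b => ZAdj a b ∧ ω a = ω b) u v

/-- The cluster of the vertex `v`. -/
def cluster (ω : Config) (v : ℤ × ℤ) : Set (ℤ × ℤ) := {w | SameCluster ω v w}

def IsCluster (ω : Config) (D : Set (ℤ × ℤ)) : Prop := ∃ v, D = cluster ω v

def infiniteClusters (ω : Config) : Set (Set (ℤ × ℤ)) := {D | IsCluster ω D ∧ D.Infinite}

/-! ### Contours.
An edge of `ℒ₁ ∪ ℒ₂` is encoded by the black face it crosses (its lower-left corner)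
together with its direction (`true` = horizontal).  Endpoints are recorded in doubled
coordinates, so that the vertex `(x, y)` of the plane corresponds to `(2x, 2y)`. -/

abbrev BEdge := (ℤ × ℤ) × Bool

def IsBlackFace (f : ℤ × ℤ) : Prop := Even (f.1 + f.2)

/-- Edges of `ℒ₁` (whose vertices are the points `(m - 1/2, n + 1/2)`, `m, n` even). -/
def IsPrimalEdge (e : BEdge) : Prop :=
  (e.2 = true ∧ Even e.1.1 ∧ Even e.1.2) ∨ (e.2 = false ∧ Odd e.1.1 ∧ Odd e.1.2)

/-- Edges of `ℒ₂` (whose vertices are the points `(m - 1/2, n + 1/2)`, `m, n` odd). -/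
def IsDualEdge (e : BEdge) : Prop :=
  (e.2 = true ∧ Odd e.1.1 ∧ Odd e.1.2) ∨ (e.2 = false ∧ Even e.1.1 ∧ Even e.1.2)

/-- The two endpoints of a contour edge, in doubled coordinates. -/
def edgeEnds (e : BEdge) : (ℤ × ℤ) × (ℤ × ℤ) :=
  if e.2 then ((2 * e.1.1 - 1, 2 * e.1.2 + 1), (2 * e.1.1 + 3, 2 * e.1.2 + 1))
  else ((2 * e.1.1 + 1, 2 * e.1.2 - 1), (2 * e.1.1 + 1, 2 * e.1.2 + 3))

def shareEnd (e₁ e₂ : BEdge) : Prop :=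
  (edgeEnds e₁).1 = (edgeEnds e₂).1 ∨ (edgeEnds e₁).1 = (edgeEnds e₂).2 ∨
  (edgeEnds e₁).2 = (edgeEnds e₂).1 ∨ (edgeEnds e₁).2 = (edgeEnds e₂).2

/-- The contour configuration `φ(ω)`: a horizontal (resp. vertical) edge crossing the
black face with lower-left corner `(m, n)` is present iff the two lower corners differ
from the two upper ones (resp. the two left corners differ from the two right ones). -/
def contourCfg (ω : Config) (e : BEdge) : Bool :=
  if IsBlackFace e.1 then
    (if e.2 then ω (e.1.1, e.1.2) != ω (e.1.1, e.1.2 + 1)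
     else ω (e.1.1, e.1.2) != ω (e.1.1 + 1, e.1.2))
  else false

def SameContourB (φ : BEdge → Bool) (e e' : BEdge) : Prop :=
  Relation.ReflTransGen (fun a b => φ a = true ∧ φ b = true ∧ shareEnd a b) e e'

def contourB (φ : BEdge → Bool) (e : BEdge) : Set BEdge := {e' | SameContourB φ e e'}

/-- `C` is a contour (connected component of present edges) of the edge configuration `φ`. -/
def IsContourB (φ : BEdge → Bool) (C : Set BEdge) : Prop := ∃ e, φ e = true ∧ C = contourB φ e

def IsContour (ω : Config) (C : Set BEdge) : Prop := IsContourB (contourCfg ω) C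

def IsPrimalContour (ω : Config) (C : Set BEdge) : Prop := IsContour ω C ∧ ∀ e ∈ C, IsPrimalEdge e

def IsDualContour (ω : Config) (C : Set BEdge) : Prop := IsContour ω C ∧ ∀ e ∈ C, IsDualEdge e

/-- The vertex `v` of `G` is at Euclidean distance `1/2` from the contour edge `e`
(equivalently, `v` is a corner of the black face crossed by `e`). -/
def EdgeIncVtx (e : BEdge) (v : ℤ × ℤ) : Prop :=
  (v.1 = e.1.1 ∨ v.1 = e.1.1 + 1) ∧ (v.2 = e.1.2 ∨ v.2 = e.1.2 + 1)

/-- The contour `C` is incident to the cluster `D`. -/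
def ContourIncCluster (C : Set BEdge) (D : Set (ℤ × ℤ)) : Prop := ∃ e ∈ C, ∃ v ∈ D, EdgeIncVtx e v

/-- The edge of `G` joining `u` and `v` is crossed by the contour edge `e`
(doubled midpoints are compared). -/
def crossesG (e : BEdge) (u v : ℤ × ℤ) : Prop :=
  ZAdj u v ∧
    (if e.2 then
      (u.1 + v.1, u.2 + v.2) = (2 * e.1.1, 2 * e.1.2 + 1) ∨
      (u.1 + v.1, u.2 + v.2) = (2 * e.1.1 + 2, 2 * e.1.2 + 1)
     else
      (u.1 + v.1, u.2 + v.2) = (2 * e.1.1 + 1, 2 * e.1.2) ∨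
      (u.1 + v.1, u.2 + v.2) = (2 * e.1.1 + 1, 2 * e.1.2 + 2))

/-- The connected component of `v` in the graph obtained from `G` by deleting every
edge crossed by some contour edge belonging to `R`. -/
def GminusComp (R : Set BEdge) (v : ℤ × ℤ) : Set (ℤ × ℤ) :=
  {w | Relation.ReflTransGen (fun a b => ZAdj a b ∧ ¬∃ e ∈ R, crossesG e a b) v w}

/-! ### Ends of contours -/

/-- The connected component of the edge `e` within the edge set `S`. -/
def compIn (S : Set BEdge) (e : BEdge) : Set BEdge :=
  {e' | Relation.ReflTransGen (fun a b => a ∈ S ∧ b ∈ S ∧ shareEnd a b) e e'}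

/-- The contour `C` has at most two ends: removing any finite set of edges leaves at
most two infinite components. -/
def AtMostTwoEnds (C : Set BEdge) : Prop :=
  ∀ F : Set BEdge, F.Finite →
    ∀ e₁ e₂ e₃, e₁ ∈ C \ F → e₂ ∈ C \ F → e₃ ∈ C \ F →
      (compIn (C \ F) e₁).Infinite → (compIn (C \ F) e₂).Infinite →
      (compIn (C \ F) e₃).Infinite →
      compIn (C \ F) e₁ = compIn (C \ F) e₂ ∨ compIn (C \ F) e₁ = compIn (C \ F) e₃ ∨
        compIn (C \ F) e₂ = compIn (C \ F) e₃

/-! ### Planar embedding.  Note that `ℝ × ℝ` carries the ℓ∞ (sup) product metric. -/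

abbrev Plane := ℝ × ℝ

/-- The point of the plane with doubled coordinates `p`. -/
def ptOfDoubled (p : ℤ × ℤ) : Plane := ((p.1 : ℝ) / 2, (p.2 : ℝ) / 2)

/-- The planar position of a vertex of `G`. -/
def vtxPt (v : ℤ × ℤ) : Plane := ((v.1 : ℝ), (v.2 : ℝ))

/-- The closed planar segment realizing a contour edge. -/
def segOf (e : BEdge) : Set Plane :=
  segment ℝ (ptOfDoubled (edgeEnds e).1) (ptOfDoubled (edgeEnds e).2)

/-- The closed subset of `ℝ²` realizing a set of contour edges. -/
def contourSet (C : Set BEdge) : Set Plane := ⋃ e ∈ C, segOf e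

/-- The unbounded connected components of the complement of `S ⊆ ℝ²`. -/
def unbComps (S : Set Plane) : Set (Set Plane) :=
  {T | (∃ x ∈ Sᶜ, T = connectedComponentIn Sᶜ x) ∧ ¬Bornology.IsBounded T}

/-- The family `𝒞₂` of infinite contours whose planar complement has exactly two
unbounded components. -/
def C2set (ω : Config) : Set (Set BEdge) :=
  {C | IsContour ω C ∧ C.Infinite ∧ (unbComps (contourSet C)).ncard = 2}

/-! ### Interfaces, drawn on the dual `[Aℤ²]*` of the augmented square grid. -/

/-- `R(e)`: points at ℓ∞-distance at most `1/4` from the segment `e`. -/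
def Rnbhd (e : BEdge) : Set Plane := {x | Metric.infDist x (segOf e) ≤ 1 / 4}

/-- Edges of `[Aℤ²]*`, encoded by (index of) their lower-left endpoint and a direction
(`true` = horizontal); the vertex with index `(k, l)` is the point `(k/2 + 1/4, l/2 + 1/4)`. -/
abbrev QEdge := (ℤ × ℤ) × Bool

def qVtx (p : ℤ × ℤ) : Plane := ((p.1 : ℝ) / 2 + 1 / 4, (p.2 : ℝ) / 2 + 1 / 4)

def qEnds (q : QEdge) : (ℤ × ℤ) × (ℤ × ℤ) :=
  if q.2 then (q.1, (q.1.1 + 1, q.1.2)) else (q.1, (q.1.1, q.1.2 + 1))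

def qSeg (q : QEdge) : Set Plane := segment ℝ (qVtx (qEnds q).1) (qVtx (qEnds q).2)

/-- The interface of a contour `C`: the edges of `[Aℤ²]*` constituting the topological
boundary of `⋃ e ∈ C, R(e)`. -/
def ifaceEdges (C : Set BEdge) : Set QEdge := {q | qSeg q ⊆ frontier (⋃ e ∈ C, Rnbhd e)}

/-- The interface of the contour configuration `φ(ω)`: the union of the interfaces of
all contours. -/
def interfaceOf (ω : Config) : Set QEdge := ⋃ C ∈ {C | IsContour ω C}, ifaceEdges C

def qShare (q₁ q₂ : QEdge) : Prop :=
  (qEnds q₁).1 = (qEnds q₂).1 ∨ (qEnds q₁).1 = (qEnds q₂).2 ∨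
  (qEnds q₁).2 = (qEnds q₂).1 ∨ (qEnds q₁).2 = (qEnds q₂).2

def qCompIn (S : Set QEdge) (q : QEdge) : Set QEdge :=
  {q' | Relation.ReflTransGen (fun a b => a ∈ S ∧ b ∈ S ∧ qShare a b) q q'}

/-- `I` is a connected component of the interface of `φ(ω)`. -/
def IsInterfaceComp (ω : Config) (I : Set QEdge) : Prop :=
  ∃ q ∈ interfaceOf ω, I = qCompIn (interfaceOf ω) q

/-- The subset of `ℝ²` realizing a set of `[Aℤ²]*`-edges. -/
def qRealize (I : Set QEdge) : Set Plane := ⋃ q ∈ I, qSeg q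

/-- `F_I`: the vertices of `G` at ℓ∞-distance exactly `1/4` from `I`. -/
def interfaceNbrs (I : Set QEdge) : Set (ℤ × ℤ) :=
  {v | Metric.infDist (vtxPt v) (qRealize I) = 1 / 4}

/-- The edge set `I` is a doubly-infinite self-avoiding path in `[Aℤ²]*`. -/
def IsBiInfPathQ (I : Set QEdge) : Prop :=
  ∃ γ : ℤ → ℤ × ℤ, Function.Injective γ ∧
    (∀ i : ℤ, ∃ q ∈ I, qEnds q = (γ i, γ (i + 1)) ∨ qEnds q = (γ (i + 1), γ i)) ∧
    (∀ q ∈ I, ∃ i : ℤ, qEnds q = (γ i, γ (i + 1)) ∨ qEnds q = (γ (i + 1), γ i))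

/-- The edge set `I` is a (finite) self-avoiding cycle in `[Aℤ²]*`. -/
def IsCycleQ (I : Set QEdge) : Prop :=
  ∃ n : ℕ, 0 < n ∧ ∃ γ : ℤ → ℤ × ℤ,
    (∀ i : ℤ, γ (i + n) = γ i) ∧
    (∀ i j : ℤ, 0 ≤ i → i < j → j < n → γ i ≠ γ j) ∧
    (∀ i : ℤ, ∃ q ∈ I, qEnds q = (γ i, γ (i + 1)) ∨ qEnds q = (γ (i + 1), γ i)) ∧
    (∀ q ∈ I, ∃ i : ℤ, qEnds q = (γ i, γ (i + 1)) ∨ qEnds q = (γ (i + 1), γ i))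

/-- `F` is the vertex set of a doubly-infinite self-avoiding path in `G`. -/
def IsBiInfPathVtxSet (F : Set (ℤ × ℤ)) : Prop :=
  ∃ p : ℤ → ℤ × ℤ, Function.Injective p ∧ (∀ i : ℤ, ZAdj (p i) (p (i + 1))) ∧ Set.range p = F

/-- `F` is the vertex set of a self-avoiding cycle in `G`. -/
def IsCycleVtxSet (F : Set (ℤ × ℤ)) : Prop :=
  ∃ n : ℕ, 0 < n ∧ ∃ p : ℤ → ℤ × ℤ,
    (∀ i : ℤ, p (i + n) = p i) ∧
    (∀ i j : ℤ, 0 ≤ i → i < j → j < n → p i ≠ p j) ∧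
    (∀ i : ℤ, ZAdj (p i) (p (i + 1))) ∧ Set.range p = F

/-! ### Measures, translations and symmetries -/

/-- Translation of configurations by `t ∈ ℤ²`. -/
def shift (t : ℤ × ℤ) (ω : Config) : Config := fun v => ω (v.1 - t.1, v.2 - t.2)

/-- The involution `θ` exchanging the states `0` and `1`. -/
def flipConf (ω : Config) : Config := fun v => !(ω v)

/-- The primal contour configuration (the marginal on `E(ℒ₁)`). -/
def primalOf (ω : Config) : BEdge → Bool := fun e => if IsPrimalEdge e then contourCfg ω e else false

/-- The dual contour configuration (the marginal on `E(ℒ₂)`). -/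
def dualOf (ω : Config) : BEdge → Bool := fun e => if IsDualEdge e then contourCfg ω e else false

/-- The four boundary edges of the face `S` of `ℒ₁` indexed by the parameters
`(p, q)` (`p`, `q` odd) of the `ℒ₂`-vertex at its centre. -/
def faceEdgesL1 (p q : ℤ) : Set BEdge :=
  {((p - 1, q + 1), true), ((p - 1, q - 1), true), ((p - 2, q), false), ((p, q), false)}

/-- Switch the states of the four boundary edges of a face of `ℒ₁`. -/
def switchFace (p q : ℤ) (φ : BEdge → Bool) : BEdge → Bool :=
  fun e => if e ∈ faceEdgesL1 p q then !(φ e) else φ e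

/-- (A1): invariance under the subgroup of `ℤ²` generated by `(1,1)` and `(1,-1)`,
i.e. under every translation `t` with `t.1 + t.2` even. -/
def SatisfiesA1 (μ : Measure Config) : Prop :=
  ∀ t : ℤ × ℤ, Even (t.1 + t.2) → Measure.map (shift t) μ = μ

/-- (A2): `2ℤ × 2ℤ`-ergodicity. -/
def SatisfiesA2 (μ : Measure Config) : Prop :=
  ∀ A : Set Config, MeasurableSet A →
    (∀ t : ℤ × ℤ, shift (2 * t.1, 2 * t.2) ⁻¹' A = A) → μ A = 0 ∨ μ A = 1

/-- (A3): symmetry under exchanging `0` and `1`. -/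
def SatisfiesA3 (μ : Measure Config) : Prop := Measure.map flipConf μ = μ

/-- (Ak1): invariance under `2kℤ × 2kℤ`-translations. -/
def SatisfiesAk1 (k : ℕ) (μ : Measure Config) : Prop :=
  ∀ t : ℤ × ℤ, Measure.map (shift (2 * (k : ℤ) * t.1, 2 * (k : ℤ) * t.2)) μ = μ

/-- (Ak2): `2kℤ × 2kℤ`-ergodicity. -/
def SatisfiesAk2 (k : ℕ) (μ : Measure Config) : Prop :=
  ∀ A : Set Config, MeasurableSet A →
    (∀ t : ℤ × ℤ, shift (2 * (k : ℤ) * t.1, 2 * (k : ℤ) * t.2) ⁻¹' A = A) →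
      μ A = 0 ∨ μ A = 1

/-- (A4): finite energy of the primal contour marginal `ν₁ = primalOf_* μ`:
switching the four sides of a face of `ℒ₁` preserves positivity of probabilities. -/
def SatisfiesA4 (μ : Measure Config) : Prop :=
  ∀ p q : ℤ, Odd p → Odd q → ∀ E : Set (BEdge → Bool), MeasurableSet E →
    0 < Measure.map primalOf μ E → 0 < Measure.map primalOf μ (switchFace p q '' E)

/-! ### The induced site configuration on `V(ℒ₁)` (for assumption (A5)).
Vertices of `ℒ₁` are indexed by `(a, b) ∈ ℤ²` (the vertex `(2a - 1/2, 2b + 1/2)`);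
the base vertex `v₀` has index `(0, 0)`. -/

/-- Parity (as a `Bool`) of the number of `i` between `0` and `j` with `f i = true`. -/
def rangeParity (f : ℤ → Bool) (j : ℤ) : Bool :=
  if 0 ≤ j then decide (Odd (((Finset.Ico (0 : ℤ) j).filter fun i => f i = true).card))
  else decide (Odd (((Finset.Ico j (0 : ℤ)).filter fun i => f i = true).card))

/-- The site configuration on `V(ℒ₁)` induced by a dual contour configuration `ψ`
and the state `b₀` at the base vertex: states flip exactly across present dual edges. -/
def inducedSite (b₀ : Bool) (ψ : BEdge → Bool) : Config :=
  fun v => Bool.xor b₀ (Bool.xor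
    (rangeParity (fun i => ψ ((2 * i, 0), false)) v.1)
    (rangeParity (fun l => ψ ((2 * v.1 - 1, 2 * l + 1), true)) v.2))

/-- The law `λ₁` on `{0,1}^{V(ℒ₁)}` induced by the dual contour marginal of `μ`
together with a fair coin for the state of the base vertex. -/
def lam1 (μ : Measure Config) : Measure Config :=
  (1 / 2 : ℝ≥0∞) • Measure.map (fun ω => inducedSite true (dualOf ω)) μ +
    (1 / 2 : ℝ≥0∞) • Measure.map (fun ω => inducedSite false (dualOf ω)) μ

/-- (A5): `λ₁` is `2ℤ × 2ℤ`-ergodic (translations of the plane by `2ℤ × 2ℤ` act on the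
index set of `V(ℒ₁)` as all of `ℤ × ℤ`). -/
def SatisfiesA5 (μ : Measure Config) : Prop :=
  ∀ A : Set Config, MeasurableSet A → (∀ t : ℤ × ℤ, shift t ⁻¹' A = A) →
    lam1 μ A = 0 ∨ lam1 μ A = 1

/-! ### `ℒ₁`-edges indexed by `ℒ₁`-vertex coordinates; boxes of `ℒ₂`-faces. -/

/-- The horizontal edge of `ℒ₁` joining the `ℒ₁`-vertices indexed `(a, b)` and `(a+1, b)`. -/
def hEdge (a b : ℤ) : BEdge := ((2 * a, 2 * b), true)

/-- The vertical edge of `ℒ₁` joining the `ℒ₁`-vertices indexed `(a, b)` and `(a, b+1)`. -/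
def vEdge (a b : ℤ) : BEdge := ((2 * a - 1, 2 * b + 1), false)

/-- Membership in `Φ₁`: a bond configuration of `ℒ₁` in which every vertex of `ℒ₁`
has an even number of incident present edges. -/
def MemPhi1 (φ : BEdge → Bool) : Prop :=
  (∀ e, φ e = true → IsPrimalEdge e) ∧
    ∀ a b : ℤ,
      Even ((if φ (hEdge (a - 1) b) then 1 else 0) + (if φ (hEdge a b) then 1 else 0) +
        (if φ (vEdge a (b - 1)) then 1 else 0) + (if φ (vEdge a b) then 1 else 0) : ℕ)

/-- The edges of `ℒ₁` crossing the boundary of the `M × N` box of faces of `ℒ₂`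
whose lower-left face contains the `ℒ₁`-vertex indexed `(a₀, b₀)`. -/
def crossEdges (a₀ b₀ : ℤ) (M N : ℕ) : Finset BEdge :=
  ((Finset.Ico b₀ (b₀ + (N : ℤ))).image fun b => hEdge (a₀ - 1) b) ∪
  ((Finset.Ico b₀ (b₀ + (N : ℤ))).image fun b => hEdge (a₀ + (M : ℤ) - 1) b) ∪
  ((Finset.Ico a₀ (a₀ + (M : ℤ))).image fun a => vEdge a (b₀ - 1)) ∪
  ((Finset.Ico a₀ (a₀ + (M : ℤ))).image fun a => vEdge a (b₀ + (N : ℤ) - 1))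

/-- The `ℒ₁`-vertex indexed `(a, b)` lies strictly inside the box. -/
def insideBox (a₀ b₀ : ℤ) (M N : ℕ) (a b : ℤ) : Prop :=
  a₀ ≤ a ∧ a < a₀ + (M : ℤ) ∧ b₀ ≤ b ∧ b < b₀ + (N : ℤ)

/-- The edges of `ℒ₁` strictly enclosed by the boundary of the box (both endpoints
strictly inside): the subgraph `B_{M-1,N-1}`. -/
def interiorEdges (a₀ b₀ : ℤ) (M N : ℕ) : Set BEdge :=
  {e | (∃ a b : ℤ, e = hEdge a b ∧ insideBox a₀ b₀ M N a b ∧ insideBox a₀ b₀ M N (a + 1) b) ∨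
       (∃ a b : ℤ, e = vEdge a b ∧ insideBox a₀ b₀ M N a b ∧ insideBox a₀ b₀ M N a (b + 1))}

/-! ### Contours of an unconstrained site configuration on `V(ℒ₂)`.
Vertices of `ℒ₂` are indexed by `(c, d) ∈ ℤ²` (the vertex `(2c + 1/2, 2d + 3/2)`);
adjacency of `ℒ₂`-vertices is `ZAdj` on indices. -/

/-- The contour configuration `ψ₁(ρ)` on `ℒ₁` of a site configuration `ρ` on `V(ℒ₂)`:
an edge of `ℒ₁` is present iff the two `ℒ₂`-vertices at distance `1` from it have
different states. -/
def psi1 (ρ : Config) (e : BEdge) : Bool :=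
  if e.2 then
    if Even e.1.1 ∧ Even e.1.2 then
      ρ (e.1.1 / 2, e.1.2 / 2) != ρ (e.1.1 / 2, e.1.2 / 2 - 1)
    else false
  else
    if Odd e.1.1 ∧ Odd e.1.2 then
      ρ ((e.1.1 + 1) / 2 - 1, (e.1.2 - 1) / 2) != ρ ((e.1.1 + 1) / 2, (e.1.2 - 1) / 2)
    else false

/-- The (indices of the) two `ℒ₂`-vertices at Euclidean distance `1` from an `ℒ₁`-edge. -/
def sepVerts (e : BEdge) : Set (ℤ × ℤ) :=
  if e.2 then {(e.1.1 / 2, e.1.2 / 2), (e.1.1 / 2, e.1.2 / 2 - 1)}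
  else {((e.1.1 + 1) / 2 - 1, (e.1.2 - 1) / 2), ((e.1.1 + 1) / 2, (e.1.2 - 1) / 2)}

/-- A contour `C ⊆ E(ℒ₁)` is incident to a set `D` of `ℒ₂`-vertices (Euclidean
distance `1`). -/
def ContourIncL2Cluster (C : Set BEdge) (D : Set (ℤ × ℤ)) : Prop :=
  ∃ e ∈ C, ∃ v ∈ sepVerts e, v ∈ D

/-!
Let `x` be a vertex of the infinite component `K` of `G ∖ C` at a face crossed by `C`. Its
cluster lies in `K` and is incident to `C`; it remains to show that it is infinite. Otherwise the
right-hand walk along `C` that starts with this cluster on its right, and by the constraint keeps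
it there, is periodic: a closed walk of edges of `C`. Its winding number is constant on `K`,
hence zero since `K` is infinite, so it vanishes to the right of the walk and not to its left.
Following `C` away from the walk, each further edge either leaves a face visited by the walk,
where the walk turns right and the edge lies on its left, or shares an unvisited face with an
edge already known to border a nonzero winding number. Such points form a bounded set, so `C`
would be finite.
-/

open Function

lemma zAdj_iff {a b : ℤ × ℤ} : ZAdj a b ↔ (a.1 - b.1).natAbs + (a.2 - b.2).natAbs = 1 := by
  unfold ZAdj; rw [Int.abs_eq_natAbs, Int.abs_eq_natAbs]; omega

lemma zAdj_comm {a b : ℤ × ℤ} : ZAdj a b ↔ ZAdj b a := by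
  simp only [zAdj_iff]; omega

lemma eq_univ_of_forall_zAdj {S : Set (ℤ × ℤ)} (hS : ∀ a ∈ S, ∀ b, ZAdj a b → b ∈ S)
    {a : ℤ × ℤ} (ha : a ∈ S) : S = Set.univ := by
  have hline : ∀ p q : ℤ, (p, q) ∈ S → ∀ n : ℤ, (p + n, q) ∈ S ∧ (p, q + n) ∈ S := by
    intro p q h n
    induction n using Int.induction_on with
    | zero => simpa using h
    | succ n ih =>
      exact ⟨hS _ ih.1 _ (by simp [zAdj_iff]), hS _ ih.2 _ (by simp [zAdj_iff])⟩
    | pred n ih =>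
      exact ⟨hS _ ih.1 _ (by simp [zAdj_iff]), hS _ ih.2 _ (by simp [zAdj_iff])⟩
  refine Set.eq_univ_of_forall fun ⟨p', q'⟩ => ?_
  obtain ⟨p, q⟩ := a
  have h := (hline _ _ (hline p q ha (p' - p)).1 (q' - q)).2
  simpa using h

lemma exists_mem_periodicPts_of_mapsTo {α : Type*} {f : α → α} {s : Set α} (hs : s.Finite)
    (hf : Set.MapsTo f s s) {x : α} (hx : x ∈ s) : ∃ y ∈ s, y ∈ periodicPts f := by
  obtain ⟨m, n, hmn, h⟩ := Set.Finite.exists_lt_map_eq_of_forall_mem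
    (f := fun n => f^[n] x) (fun n => hf.iterate n hx) hs
  refine ⟨f^[m] x, hf.iterate m hx, mk_mem_periodicPts (Nat.sub_pos_of_lt hmn) ?_⟩
  change f^[n - m] (f^[m] x) = f^[m] x
  rw [← iterate_add_apply, Nat.sub_add_cancel hmn.le]
  exact h.symm

def IsWhiteFace (p : ℤ × ℤ) : Prop := Odd (p.1 + p.2)

inductive Dir : Type
  | E | N | W | S
  deriving DecidableEq

namespace Dir

instance : Fintype Dir := ⟨⟨{E, N, W, S}, by decide⟩, by intro x; cases x <;> decide⟩

def turnRight : Dir → Dir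
  | E => S | S => W | W => N | N => E

def turnLeft : Dir → Dir
  | E => N | N => W | W => S | S => E

def reverse : Dir → Dir
  | E => W | W => E | N => S | S => N

def vec : Dir → ℤ × ℤ
  | E => (1, 0) | N => (0, 1) | W => (-1, 0) | S => (0, -1)

@[simp] lemma turnLeft_turnRight (δ : Dir) : δ.turnRight.turnLeft = δ := by cases δ <;> rfl
@[simp] lemma reverse_reverse (δ : Dir) : δ.reverse.reverse = δ := by cases δ <;> rfl
@[simp] lemma turnLeft_turnLeft (δ : Dir) : δ.turnLeft.turnLeft = δ.reverse := by cases δ <;> rfl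
@[simp] lemma reverse_turnLeft (δ : Dir) : δ.reverse.turnLeft = δ.turnRight := by cases δ <;> rfl

lemma eq_or_eq_turnRight_or_eq_turnLeft_or_eq_reverse (β δ : Dir) :
    β = δ ∨ β = δ.turnRight ∨ β = δ.turnLeft ∨ β = δ.reverse := by
  cases β <;> cases δ <;> simp [turnRight, turnLeft, reverse]

end Dir

/-- An oriented edge of `ℒ₁ ∪ ℒ₂`; its tail is the centre `(r + 1/2, s + 1/2)` of the face
with lower-left corner `tail = (r, s)`. -/
structure Dart where
  tail : ℤ × ℤ
  dir : Dir

namespace Dart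

def head (d : Dart) : ℤ × ℤ := (d.tail.1 + 2 * d.dir.vec.1, d.tail.2 + 2 * d.dir.vec.2)

def reverse (d : Dart) : Dart := ⟨d.head, d.dir.reverse⟩

def edge (d : Dart) : BEdge :=
  match d.dir with
  | .E => ((d.tail.1 + 1, d.tail.2), true)
  | .W => ((d.tail.1 - 1, d.tail.2), true)
  | .N => ((d.tail.1, d.tail.2 + 1), false)
  | .S => ((d.tail.1, d.tail.2 - 1), false)

/-- The corner of the crossed black face to the right of `d`, next to its tail. -/
def rightCorner (d : Dart) : ℤ × ℤ :=
  match d.dir with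
  | .E => (d.tail.1 + 1, d.tail.2)
  | .N => (d.tail.1 + 1, d.tail.2 + 1)
  | .W => (d.tail.1, d.tail.2 + 1)
  | .S => d.tail

def leftCorner (d : Dart) : ℤ × ℤ := rightCorner ⟨d.tail, d.dir.turnLeft⟩

def IsPresent (ω : Config) (d : Dart) : Prop := contourCfg ω d.edge = true

def next (ω : Config) (d : Dart) : Dart :=
  ⟨d.head, if IsPresent ω ⟨d.head, d.dir.turnRight⟩ then d.dir.turnRight
    else if IsPresent ω ⟨d.head, d.dir⟩ then d.dir else d.dir.turnLeft⟩

@[simp] lemma tail_next (ω : Config) (d : Dart) : (next ω d).tail = d.head := rfl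

@[simp] lemma reverse_reverse (d : Dart) : d.reverse.reverse = d := by
  obtain ⟨⟨r, s⟩, δ⟩ := d
  cases δ <;> simp [reverse, head, Dir.vec, Dir.reverse]

@[simp] lemma head_reverse (d : Dart) : d.reverse.head = d.tail := by
  obtain ⟨⟨r, s⟩, δ⟩ := d
  cases δ <;> simp [reverse, head, Dir.vec, Dir.reverse]

@[simp] lemma edge_reverse (d : Dart) : d.reverse.edge = d.edge := by
  obtain ⟨⟨r, s⟩, δ⟩ := d
  cases δ <;> simp [reverse, edge, head, Dir.vec, Dir.reverse] <;> omega

lemma leftCorner_reverse (d : Dart) :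
    d.reverse.leftCorner = rightCorner ⟨d.head, d.dir.turnRight⟩ := by
  simp [leftCorner, reverse]

lemma eq_or_eq_reverse_of_edge_eq {d d' : Dart} (h : d'.edge = d.edge) :
    d' = d ∨ d' = d.reverse := by
  obtain ⟨⟨r', s'⟩, δ'⟩ := d'
  obtain ⟨⟨r, s⟩, δ⟩ := d
  cases δ' <;> cases δ <;>
    simp [edge, reverse, head, Dir.vec, Dir.reverse, Prod.ext_iff] at h ⊢ <;> omega

lemma injective_rightCorner_dir : Injective fun d : Dart => (d.rightCorner, d.dir) := by
  rintro ⟨⟨r, s⟩, δ⟩ ⟨⟨r', s'⟩, δ'⟩ h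
  simp only [Prod.mk.injEq] at h
  obtain ⟨h, rfl⟩ := h
  cases δ <;> simp [rightCorner, Prod.ext_iff] at h ⊢ <;> omega

lemma isWhiteFace_head {d : Dart} (hd : IsWhiteFace d.tail) : IsWhiteFace d.head := by
  obtain ⟨⟨r, s⟩, δ⟩ := d
  obtain ⟨t, ht⟩ := hd
  refine ⟨t + δ.vec.1 + δ.vec.2, ?_⟩
  cases δ <;> simp [head, Dir.vec] at ht ⊢ <;> omega

lemma isBlackFace_edge {d : Dart} (hd : IsWhiteFace d.tail) : IsBlackFace d.edge.1 := by
  obtain ⟨⟨r, s⟩, δ⟩ := d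
  obtain ⟨t, ht⟩ := hd
  cases δ <;> simp only [edge, IsBlackFace] at ht ⊢
  exacts [⟨t + 1, by omega⟩, ⟨t + 1, by omega⟩, ⟨t, by omega⟩, ⟨t, by omega⟩]

lemma crossesG_rightCorner_leftCorner (d : Dart) :
    crossesG d.edge d.rightCorner d.leftCorner := by
  obtain ⟨⟨r, s⟩, δ⟩ := d
  cases δ <;> simp [crossesG, edge, rightCorner, leftCorner, Dir.turnLeft, zAdj_iff] <;> omega

lemma zAdj_rightCorner_reverse_leftCorner (d : Dart) :
    ZAdj d.rightCorner d.reverse.leftCorner := by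
  obtain ⟨⟨r, s⟩, δ⟩ := d
  cases δ <;> simp [leftCorner_reverse, rightCorner, head, Dir.vec, Dir.turnRight, zAdj_iff] <;>
    omega

lemma edgeIncVtx_iff {d : Dart} {u : ℤ × ℤ} :
    EdgeIncVtx d.edge u ↔ u = d.rightCorner ∨ u = d.leftCorner ∨
      u = d.reverse.rightCorner ∨ u = d.reverse.leftCorner := by
  obtain ⟨⟨r, s⟩, δ⟩ := d
  obtain ⟨p, q⟩ := u
  cases δ <;> simp [EdgeIncVtx, edge, rightCorner, leftCorner, reverse, head, Dir.vec,
    Dir.turnLeft, Dir.reverse] <;> omega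

lemma edgeIncVtx_rightCorner (d : Dart) : EdgeIncVtx d.edge d.rightCorner :=
  edgeIncVtx_iff.2 (Or.inl rfl)

lemma edgeIncVtx_leftCorner (d : Dart) : EdgeIncVtx d.edge d.leftCorner :=
  edgeIncVtx_iff.2 (Or.inr (Or.inl rfl))

end Dart

lemma isBlackFace_of_contourCfg {ω : Config} {e : BEdge} (h : contourCfg ω e = true) :
    IsBlackFace e.1 := by
  by_contra hb
  simp [contourCfg, hb] at h

lemma crossesG_symm {e : BEdge} {u w : ℤ × ℤ} (h : crossesG e u w) : crossesG e w u := by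
  obtain ⟨hadj, hsum⟩ := h
  refine ⟨zAdj_comm.1 hadj, ?_⟩
  rwa [add_comm w.1, add_comm w.2]

lemma edgeIncVtx_of_crossesG {e : BEdge} {u w : ℤ × ℤ} (h : crossesG e u w) :
    EdgeIncVtx e u := by
  obtain ⟨⟨m, n⟩, t⟩ := e
  obtain ⟨hadj, hsum⟩ := h
  rw [zAdj_iff] at hadj
  cases t <;> simp [EdgeIncVtx] at hsum ⊢ <;> omega

lemma finite_setOf_edgeIncVtx (u : ℤ × ℤ) : {e : BEdge | EdgeIncVtx e u}.Finite := by
  refine ((Set.finite_Icc (u.1 - 1, u.2 - 1) u).prod Set.finite_univ).subset fun e he => ?_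
  simp only [Set.mem_ofPred_eq, EdgeIncVtx] at he
  simp only [Set.mem_prod, Set.mem_Icc, Prod.le_def, Set.mem_univ, and_true]
  omega

lemma eq_of_crossesG_of_crossesG {e e' : BEdge} {u w : ℤ × ℤ} (he : IsBlackFace e.1)
    (he' : IsBlackFace e'.1) (h : crossesG e u w) (h' : crossesG e' u w) : e = e' := by
  obtain ⟨⟨m, n⟩, t⟩ := e
  obtain ⟨⟨m', n'⟩, t'⟩ := e'
  obtain ⟨k, hk⟩ := he
  obtain ⟨k', hk'⟩ := he'
  obtain ⟨hadj, hsum⟩ := h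
  obtain ⟨-, hsum'⟩ := h'
  rw [zAdj_iff] at hadj
  cases t <;> cases t' <;> simp at hk hk' hsum hsum' ⊢ <;> omega

lemma fst_eq_of_crossesG_of_edgeIncVtx {e c : BEdge} {u w : ℤ × ℤ} (he : IsBlackFace e.1)
    (hc : IsBlackFace c.1) (h : crossesG e u w) (hu : EdgeIncVtx c u) (hw : EdgeIncVtx c w) :
    e.1 = c.1 := by
  obtain ⟨⟨m, n⟩, t⟩ := e
  obtain ⟨k, hk⟩ := he
  obtain ⟨k', hk'⟩ := hc
  obtain ⟨hadj, hsum⟩ := h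
  rw [zAdj_iff] at hadj
  simp only [EdgeIncVtx] at hu hw
  cases t <;> simp [Prod.ext_iff] at hk hsum ⊢ <;> omega

/-- `edgeEnds` uses doubled coordinates, in which the tail of `d` is
`(2 * d.tail.1 + 1, 2 * d.tail.2 + 1)`. -/
lemma Dart.mem_edgeEnds_edge (d : Dart) :
    (edgeEnds d.edge).1 = (2 * d.tail.1 + 1, 2 * d.tail.2 + 1) ∨
      (edgeEnds d.edge).2 = (2 * d.tail.1 + 1, 2 * d.tail.2 + 1) := by
  obtain ⟨⟨r, s⟩, δ⟩ := d
  cases δ <;> simp [edgeEnds, Dart.edge] <;> omega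

lemma shareEnd_of_mem_edgeEnds {e₁ e₂ : BEdge} {z : ℤ × ℤ}
    (h₁ : (edgeEnds e₁).1 = z ∨ (edgeEnds e₁).2 = z)
    (h₂ : (edgeEnds e₂).1 = z ∨ (edgeEnds e₂).2 = z) : shareEnd e₁ e₂ := by
  unfold shareEnd
  rcases h₁ with h₁ | h₁ <;> rcases h₂ with h₂ | h₂ <;> rw [h₁, h₂] <;> tauto

lemma shareEnd_symm {e₁ e₂ : BEdge} (h : shareEnd e₁ e₂) : shareEnd e₂ e₁ := by
  unfold shareEnd at *
  rcases h with h | h | h | h <;> rw [h] <;> tauto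

lemma Dart.shareEnd_edge_of_tail_eq_head {d d' : Dart} (h : d'.tail = d.head) :
    shareEnd d.edge d'.edge := by
  have hd := d.reverse.mem_edgeEnds_edge
  have hd' := d'.mem_edgeEnds_edge
  rw [edge_reverse] at hd
  rw [h] at hd'
  exact shareEnd_of_mem_edgeEnds hd hd'

lemma exists_dart_of_mem_edgeEnds {e : BEdge} {z : ℤ × ℤ} (he : IsBlackFace e.1)
    (hz : (edgeEnds e).1 = z ∨ (edgeEnds e).2 = z) :
    ∃ d : Dart, IsWhiteFace d.tail ∧ d.edge = e ∧ z = (2 * d.tail.1 + 1, 2 * d.tail.2 + 1) := by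
  obtain ⟨⟨m, n⟩, t⟩ := e
  obtain ⟨k, hk⟩ := he
  simp only at hk
  cases t <;> simp only [edgeEnds, Bool.false_eq_true, if_false, if_true] at hz <;>
    rcases hz with rfl | rfl
  · exact ⟨⟨(m, n - 1), .N⟩, ⟨k - 1, by simp; omega⟩, by simp [Dart.edge], by simp; omega⟩
  · exact ⟨⟨(m, n + 1), .S⟩, ⟨k, by simp; omega⟩, by simp [Dart.edge], by simp; omega⟩
  · exact ⟨⟨(m - 1, n), .E⟩, ⟨k - 1, by simp; omega⟩, by simp [Dart.edge], by simp; omega⟩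
  · exact ⟨⟨(m + 1, n), .W⟩, ⟨k, by simp; omega⟩, by simp [Dart.edge], by simp; omega⟩

lemma exists_dart_edge_eq {e : BEdge} (he : IsBlackFace e.1) :
    ∃ d : Dart, IsWhiteFace d.tail ∧ d.edge = e :=
  let ⟨d, hd, hde, _⟩ := exists_dart_of_mem_edgeEnds he (Or.inl rfl)
  ⟨d, hd, hde⟩

lemma exists_tail_eq_of_shareEnd {b c : BEdge} (hb : IsBlackFace b.1) (hc : IsBlackFace c.1)
    (h : shareEnd b c) :
    ∃ d d' : Dart, IsWhiteFace d.tail ∧ d.edge = b ∧ d'.edge = c ∧ d'.tail = d.tail := by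
  have key : ∀ z, ((edgeEnds b).1 = z ∨ (edgeEnds b).2 = z) →
      ((edgeEnds c).1 = z ∨ (edgeEnds c).2 = z) →
      ∃ d d' : Dart, IsWhiteFace d.tail ∧ d.edge = b ∧ d'.edge = c ∧ d'.tail = d.tail := by
    intro z hbz hcz
    obtain ⟨d, hd, hdb, rfl⟩ := exists_dart_of_mem_edgeEnds hb hbz
    obtain ⟨d', -, hdc, hz⟩ := exists_dart_of_mem_edgeEnds hc hcz
    exact ⟨d, d', hd, hdb, hdc, Prod.ext (by simp at hz; omega) (by simp at hz; omega)⟩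
  rcases h with h | h | h | h
  exacts [key _ (Or.inl rfl) (Or.inl h.symm), key _ (Or.inl rfl) (Or.inr h.symm),
    key _ (Or.inr rfl) (Or.inl h.symm), key _ (Or.inr rfl) (Or.inr h.symm)]

section Constrained

variable {ω : Config}

/-- By the constraint, the two `G`-edges crossed by `e` both separate different states, or
neither does. -/
lemma contourCfg_iff_of_crossesG (hω : Constrained ω) {e : BEdge} {u w : ℤ × ℤ}
    (hb : IsBlackFace e.1) (h : crossesG e u w) : contourCfg ω e = true ↔ ω u ≠ ω w := by
  obtain ⟨⟨m, n⟩, t⟩ := e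
  obtain ⟨p, q⟩ := u
  obtain ⟨p', q'⟩ := w
  obtain ⟨hadj, hsum⟩ := h
  rw [zAdj_iff] at hadj
  have hc := hω m n hb
  cases t
  · simp only [Prod.mk.injEq, Bool.false_eq_true, if_false] at hsum
    obtain rfl : q = q' := by omega
    obtain ⟨rfl, rfl⟩ | ⟨rfl, rfl⟩ : (m = p ∧ m + 1 = p') ∨ (m + 1 = p ∧ m = p') := by omega
    all_goals obtain rfl | rfl : n = q ∨ n + 1 = q := by omega
    all_goals
      simp only [contourCfg, hb, if_true, Bool.false_eq_true, if_false]
      revert hc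
      generalize ω (m, n) = a, ω (m + 1, n) = b, ω (m, n + 1) = c, ω (m + 1, n + 1) = d
      cases a <;> cases b <;> cases c <;> cases d <;> decide
  · simp only [Prod.mk.injEq, if_true] at hsum
    obtain rfl : p = p' := by omega
    obtain ⟨rfl, rfl⟩ | ⟨rfl, rfl⟩ : (n = q ∧ n + 1 = q') ∨ (n + 1 = q ∧ n = q') := by omega
    all_goals obtain rfl | rfl : m = p ∨ m + 1 = p := by omega
    all_goals
      simp only [contourCfg, hb, if_true]
      revert hc
      generalize ω (m, n) = a, ω (m + 1, n) = b, ω (m, n + 1) = c, ω (m + 1, n + 1) = d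
      cases a <;> cases b <;> cases c <;> cases d <;> decide

lemma ne_of_crossesG (hω : Constrained ω) {e : BEdge} {u w : ℤ × ℤ} (hp : contourCfg ω e = true)
    (h : crossesG e u w) : ω u ≠ ω w :=
  (contourCfg_iff_of_crossesG hω (isBlackFace_of_contourCfg hp) h).1 hp

lemma eq_of_contourCfg_of_fst_eq (hω : Constrained ω) {e e' : BEdge} (he : contourCfg ω e = true)
    (he' : contourCfg ω e' = true) (h : e.1 = e'.1) : e = e' := by
  obtain ⟨⟨m, n⟩, t⟩ := e
  obtain ⟨f, t'⟩ := e'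
  obtain rfl : (m, n) = f := h
  have hb := isBlackFace_of_contourCfg he
  rcases hω m n hb with ⟨h1, -⟩ | ⟨h1, -⟩ <;> cases t <;> cases t' <;>
    simp_all [contourCfg]

lemma sameCluster_of_zAdj {u w : ℤ × ℤ} (h : ZAdj u w) (h' : ω u = ω w) : SameCluster ω u w :=
  .single ⟨h, h'⟩

lemma SameCluster.symm {u w : ℤ × ℤ} (h : SameCluster ω u w) : SameCluster ω w u := by
  induction h with
  | refl => exact .refl
  | tail _ h ih => exact .head ⟨zAdj_comm.1 h.1, h.2.symm⟩ ih

lemma SameCluster.trans {u v w : ℤ × ℤ} (h₁ : SameCluster ω u v) (h₂ : SameCluster ω v w) :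
    SameCluster ω u w :=
  Relation.ReflTransGen.trans h₁ h₂

lemma SameCluster.state_eq {u w : ℤ × ℤ} (h : SameCluster ω u w) : ω u = ω w := by
  induction h with
  | refl => rfl
  | tail _ h ih => exact ih.trans h.2

namespace Dart

lemma IsPresent.reverse {d : Dart} (hp : d.IsPresent ω) : d.reverse.IsPresent ω := by
  rwa [IsPresent, edge_reverse]

lemma isPresent_iff (hω : Constrained ω) {d : Dart} (hd : IsWhiteFace d.tail) :
    d.IsPresent ω ↔ ω d.rightCorner ≠ ω d.leftCorner :=
  contourCfg_iff_of_crossesG hω (isBlackFace_edge hd) d.crossesG_rightCorner_leftCorner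

lemma sameCluster_rightCorner_leftCorner (hω : Constrained ω) {d : Dart}
    (hd : IsWhiteFace d.tail) (hp : ¬ d.IsPresent ω) :
    SameCluster ω d.rightCorner d.leftCorner :=
  sameCluster_of_zAdj d.crossesG_rightCorner_leftCorner.1
    (not_ne_iff.1 fun h => hp ((isPresent_iff hω hd).2 h))

lemma crossesG_perp_rightCorner_reverse_leftCorner (d : Dart) :
    crossesG (d.edge.1, !d.edge.2) d.rightCorner d.reverse.leftCorner := by
  obtain ⟨⟨r, s⟩, δ⟩ := d
  cases δ <;> simp [crossesG, zAdj_iff, edge, rightCorner, leftCorner_reverse, head, Dir.vec,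
    Dir.turnRight] <;> omega

/-- `d.rightCorner` and `d.reverse.leftCorner` are the corners of the crossed face on the right
of `d`; the other edge through that face separates them and is absent. -/
lemma state_rightCorner_eq (hω : Constrained ω) {d : Dart} (hd : IsWhiteFace d.tail)
    (hp : d.IsPresent ω) : ω d.rightCorner = ω d.reverse.leftCorner := by
  have hperp := d.crossesG_perp_rightCorner_reverse_leftCorner
  refine not_ne_iff.1 fun hne => ?_
  have h := eq_of_contourCfg_of_fst_eq hω
    ((contourCfg_iff_of_crossesG hω (e := (d.edge.1, !d.edge.2)) (isBlackFace_edge hd) hperp).2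
      hne) hp rfl
  simpa using congrArg Prod.snd h

lemma state_rightCorner_ne_reverse (hω : Constrained ω) {d : Dart} (hd : IsWhiteFace d.tail)
    (hp : d.IsPresent ω) : ω d.rightCorner ≠ ω d.reverse.rightCorner := by
  rw [state_rightCorner_eq hω hd hp]
  exact ((isPresent_iff hω (isWhiteFace_head hd)).1 hp.reverse).symm

/-- The number of present edges at a white face is even. -/
lemma isPresent_turnRight_of_others (hω : Constrained ω) {V : ℤ × ℤ} (hV : IsWhiteFace V)
    {δ : Dir} (h₁ : IsPresent ω ⟨V, δ.reverse⟩) (h₂ : IsPresent ω ⟨V, δ⟩)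
    (h₃ : IsPresent ω ⟨V, δ.turnLeft⟩) : IsPresent ω ⟨V, δ.turnRight⟩ := by
  rw [isPresent_iff hω hV] at h₁ h₂ h₃ ⊢
  simp only [leftCorner, Dir.reverse_turnLeft, Dir.turnLeft_turnRight, Dir.turnLeft_turnLeft]
    at h₁ h₂ h₃ ⊢
  revert h₁ h₂ h₃
  cases ω (rightCorner ⟨V, δ⟩) <;> cases ω (rightCorner ⟨V, δ.turnLeft⟩) <;>
    cases ω (rightCorner ⟨V, δ.reverse⟩) <;> cases ω (rightCorner ⟨V, δ.turnRight⟩) <;> decide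

lemma isPresent_next (hω : Constrained ω) {d : Dart} (hd : IsWhiteFace d.tail)
    (hp : d.IsPresent ω) : (d.next ω).IsPresent ω := by
  have hV := isWhiteFace_head hd
  have hrev : IsPresent ω ⟨d.head, d.dir.reverse⟩ := hp.reverse
  unfold next
  split_ifs with h₁ h₂
  · exact h₁
  · exact h₂
  · rw [isPresent_iff hω hV] at hrev h₁ h₂ ⊢
    simp only [leftCorner, Dir.reverse_turnLeft, Dir.turnLeft_turnRight, Dir.turnLeft_turnLeft]
      at hrev h₁ h₂ ⊢
    revert hrev h₁ h₂
    cases ω (rightCorner ⟨d.head, d.dir⟩) <;> cases ω (rightCorner ⟨d.head, d.dir.turnLeft⟩) <;>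
      cases ω (rightCorner ⟨d.head, d.dir.reverse⟩) <;>
      cases ω (rightCorner ⟨d.head, d.dir.turnRight⟩) <;> decide

lemma sameCluster_rightCorner_next (hω : Constrained ω) {d : Dart} (hd : IsWhiteFace d.tail)
    (hp : d.IsPresent ω) : SameCluster ω d.rightCorner (d.next ω).rightCorner := by
  have hV := isWhiteFace_head hd
  have hside : SameCluster ω d.rightCorner (rightCorner ⟨d.head, d.dir.turnRight⟩) := by
    rw [← leftCorner_reverse]
    exact sameCluster_of_zAdj d.zAdj_rightCorner_reverse_leftCorner (state_rightCorner_eq hω hd hp)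
  have hturn : ∀ α : Dir, ¬ IsPresent ω ⟨d.head, α⟩ →
      SameCluster ω (rightCorner ⟨d.head, α⟩) (rightCorner ⟨d.head, α.turnLeft⟩) :=
    fun α h => sameCluster_rightCorner_leftCorner hω hV h
  unfold next
  split_ifs with h₁ h₂
  · exact hside
  · simpa using hside.trans (hturn _ h₁)
  · simpa using (hside.trans (hturn _ h₁)).trans (by simpa using hturn _ h₂)

lemma dir_next_eq_turnRight (hω : Constrained ω) {d : Dart} (hd : IsWhiteFace d.tail)
    (hp : d.IsPresent ω) {β : Dir} (hβ : IsPresent ω ⟨d.head, β⟩) (h₁ : β ≠ d.dir.reverse)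
    (h₂ : β ≠ (d.next ω).dir) : (d.next ω).dir = d.dir.turnRight := by
  unfold next at h₂ ⊢
  split_ifs at h₂ ⊢ with hr hs
  · rfl
  · rcases Dir.eq_or_eq_turnRight_or_eq_turnLeft_or_eq_reverse β d.dir with rfl | rfl | rfl | rfl
    · exact absurd rfl h₂
    · exact absurd hβ hr
    · exact absurd (isPresent_turnRight_of_others hω (isWhiteFace_head hd) hp.reverse hs hβ) hr
    · exact absurd rfl h₁
  · rcases Dir.eq_or_eq_turnRight_or_eq_turnLeft_or_eq_reverse β d.dir with rfl | rfl | rfl | rfl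
    · exact absurd hβ hs
    · exact absurd hβ hr
    · exact absurd rfl h₂
    · exact absurd rfl h₁

lemma exists_sameCluster_rightCorner (hω : Constrained ω) {e : BEdge}
    (hp : contourCfg ω e = true) {x : ℤ × ℤ} (hx : EdgeIncVtx e x) :
    ∃ d : Dart, IsWhiteFace d.tail ∧ d.edge = e ∧ SameCluster ω x d.rightCorner := by
  obtain ⟨d, hd, rfl⟩ := exists_dart_edge_eq (isBlackFace_of_contourCfg hp)
  have hd' : IsWhiteFace d.reverse.tail := isWhiteFace_head hd
  have hside := d.reverse.state_rightCorner_eq hω hd' (IsPresent.reverse hp)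
  have hadj := d.reverse.zAdj_rightCorner_reverse_leftCorner
  rw [reverse_reverse] at hside hadj
  rcases edgeIncVtx_iff.1 hx with rfl | rfl | rfl | rfl
  · exact ⟨d, hd, rfl, .refl⟩
  · exact ⟨d.reverse, hd', edge_reverse d, sameCluster_of_zAdj (zAdj_comm.1 hadj) hside.symm⟩
  · exact ⟨d.reverse, hd', edge_reverse d, .refl⟩
  · exact ⟨d, hd, rfl, (sameCluster_of_zAdj d.zAdj_rightCorner_reverse_leftCorner
      (state_rightCorner_eq hω hd hp)).symm⟩

end Dart

end Constrained

section Contour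

variable {ω : Config} {C : Set BEdge}

lemma IsContour.contourCfg_of_mem (hC : IsContour ω C) {e : BEdge} (he : e ∈ C) :
    contourCfg ω e = true := by
  obtain ⟨e₀, he₀, rfl⟩ := hC
  induction he with
  | refl => exact he₀
  | tail _ h _ => exact h.2.1

lemma IsContour.nonempty (hC : IsContour ω C) : C.Nonempty := by
  obtain ⟨e₀, -, rfl⟩ := hC
  exact ⟨e₀, .refl⟩

lemma IsContour.reflTransGen (hC : IsContour ω C) {e e' : BEdge} (he : e ∈ C) (he' : e' ∈ C) :
    Relation.ReflTransGen
      (fun a b => contourCfg ω a = true ∧ contourCfg ω b = true ∧ shareEnd a b) e e' := by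
  obtain ⟨e₀, -, rfl⟩ := hC
  refine Relation.ReflTransGen.trans ?_ he'
  clear he'
  induction he with
  | refl => exact .refl
  | tail _ h ih => exact .head ⟨h.2.1, h.1, shareEnd_symm h.2.2⟩ ih

lemma exists_mem_gminusComp_edgeIncVtx {R : Set BEdge} (hR : R.Nonempty) (v : ℤ × ℤ) :
    ∃ x ∈ GminusComp R v, ∃ e ∈ R, EdgeIncVtx e x := by
  by_contra! h
  have hclosed : ∀ a ∈ GminusComp R v, ∀ b, ZAdj a b → b ∈ GminusComp R v := fun a ha b hab =>
    ha.tail ⟨hab, fun ⟨e, he, hcr⟩ => h a ha e he (edgeIncVtx_of_crossesG hcr)⟩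
  obtain ⟨e, he⟩ := hR
  have huniv := eq_univ_of_forall_zAdj hclosed (Relation.ReflTransGen.refl : v ∈ GminusComp R v)
  exact h e.1 (huniv ▸ Set.mem_univ _) e he ⟨Or.inl rfl, Or.inl rfl⟩

lemma mem_gminusComp_of_sameCluster (hω : Constrained ω) (hC : IsContour ω C) {v u w : ℤ × ℤ}
    (hu : u ∈ GminusComp C v) (h : SameCluster ω u w) : w ∈ GminusComp C v := by
  induction h with
  | refl => exact hu
  | tail _ hstep ih =>
    exact ih.tail ⟨hstep.1, fun ⟨e, heC, hcross⟩ =>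
      ne_of_crossesG hω (hC.contourCfg_of_mem heC) hcross hstep.2⟩

end Contour

section Winding

structure IsClosedWalk (γ : ℕ → Dart) (k : ℕ) : Prop where
  tail_succ : ∀ i, (γ (i + 1)).tail = (γ i).head
  closed : γ k = γ 0

/-- The signed number of crossings of the vertical ray below `u` by the dart `d`. -/
def rayCrossing (u : ℤ × ℤ) (d : Dart) : ℤ :=
  match d.dir with
  | .E => if d.tail.2 < u.2 ∧ (u.1 = d.tail.1 + 1 ∨ u.1 = d.tail.1 + 2) then 1 else 0
  | .W => if d.tail.2 < u.2 ∧ (u.1 = d.tail.1 - 1 ∨ u.1 = d.tail.1) then -1 else 0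
  | _ => 0

def winding (γ : ℕ → Dart) (k : ℕ) (u : ℤ × ℤ) : ℤ := ∑ i ∈ Finset.range k, rayCrossing u (γ i)

def crossSign (a b : ℤ × ℤ) (d : Dart) : ℤ :=
  if crossesG d.edge a b then d.dir.vec.1 * (b.2 - a.2) - d.dir.vec.2 * (b.1 - a.1) else 0

lemma crossSign_comm (a b : ℤ × ℤ) (d : Dart) : crossSign b a d = -crossSign a b d := by
  unfold crossSign
  by_cases h : crossesG d.edge a b
  · rw [if_pos (crossesG_symm h), if_pos h]; ring
  · rw [if_neg (fun h' => h (crossesG_symm h')), if_neg h, neg_zero]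

lemma crossSign_ne_zero {a b : ℤ × ℤ} {d : Dart} (h : crossesG d.edge a b) :
    crossSign a b d ≠ 0 := by
  rw [crossSign, if_pos h]
  obtain ⟨⟨r, s⟩, δ⟩ := d
  obtain ⟨hadj, hsum⟩ := h
  rw [zAdj_iff] at hadj
  cases δ <;> simp [Dart.edge, Dir.vec] at hsum ⊢ <;> omega

lemma rayCrossing_up_sub (p q : ℤ) (d : Dart) :
    rayCrossing (p, q + 1) d - rayCrossing (p, q) d = crossSign (p, q) (p, q + 1) d := by
  obtain ⟨⟨r, s⟩, δ⟩ := d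
  cases δ <;> simp only [rayCrossing, crossSign, crossesG, zAdj_iff, Dart.edge, Dir.vec,
    Prod.mk.injEq, if_true, Bool.false_eq_true, if_false] <;> split_ifs <;> omega

lemma rayCrossing_right_sub (p q : ℤ) (d : Dart) :
    rayCrossing (p + 1, q) d - rayCrossing (p, q) d = crossSign (p, q) (p + 1, q) d +
      ((if d.tail.1 = p ∧ d.tail.2 < q then 1 else 0) -
        (if d.head.1 = p ∧ d.head.2 < q then 1 else 0)) := by
  obtain ⟨⟨r, s⟩, δ⟩ := d
  cases δ <;> simp only [rayCrossing, crossSign, crossesG, zAdj_iff, Dart.edge, Dart.head,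
    Dir.vec, Prod.mk.injEq, if_true, Bool.false_eq_true, if_false] <;> split_ifs <;> omega

lemma rayCrossing_eq_zero_of_le {u : ℤ × ℤ} {d : Dart} (h : u.2 ≤ d.tail.2) :
    rayCrossing u d = 0 := by
  obtain ⟨⟨r, s⟩, δ⟩ := d
  cases δ <;> simp only [rayCrossing] at h ⊢ <;> split_ifs <;> first | rfl | omega

lemma rayCrossing_eq_zero_of_two_lt {u : ℤ × ℤ} {d : Dart} (h : 2 < (u.1 - d.tail.1).natAbs) :
    rayCrossing u d = 0 := by
  obtain ⟨⟨r, s⟩, δ⟩ := d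
  cases δ <;> simp only [rayCrossing] at h ⊢ <;> split_ifs <;> first | rfl | omega

lemma rayCrossing_eq_sub_of_lt {u : ℤ × ℤ} {d : Dart} (h : d.tail.2 < u.2) :
    rayCrossing u d =
      (if u.1 ≤ d.head.1 then 1 else 0) - (if u.1 ≤ d.tail.1 then 1 else 0) := by
  obtain ⟨⟨r, s⟩, δ⟩ := d
  cases δ <;> simp only [rayCrossing, Dart.head, Dir.vec] at h ⊢ <;> split_ifs <;> omega

variable {γ : ℕ → Dart} {k : ℕ}

lemma winding_up_sub (γ : ℕ → Dart) (k : ℕ) (p q : ℤ) :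
    winding γ k (p, q + 1) - winding γ k (p, q) =
      ∑ i ∈ Finset.range k, crossSign (p, q) (p, q + 1) (γ i) := by
  simp only [winding, ← Finset.sum_sub_distrib, rayCrossing_up_sub]

lemma IsClosedWalk.winding_right_sub (hγ : IsClosedWalk γ k) (p q : ℤ) :
    winding γ k (p + 1, q) - winding γ k (p, q) =
      ∑ i ∈ Finset.range k, crossSign (p, q) (p + 1, q) (γ i) := by
  have htel := Finset.sum_range_sub'
    (fun i => if (γ i).tail.1 = p ∧ (γ i).tail.2 < q then (1 : ℤ) else 0) k
  simp only [hγ.closed, sub_self, hγ.tail_succ] at htel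
  simp only [winding, ← Finset.sum_sub_distrib, rayCrossing_right_sub, Finset.sum_add_distrib,
    htel, add_zero]

lemma IsClosedWalk.winding_sub (hγ : IsClosedWalk γ k) {a b : ℤ × ℤ} (hab : ZAdj a b) :
    winding γ k b - winding γ k a = ∑ i ∈ Finset.range k, crossSign a b (γ i) := by
  obtain ⟨p, q⟩ := a
  obtain ⟨p', q'⟩ := b
  rw [zAdj_iff] at hab
  have hswap : ∀ u w : ℤ × ℤ, winding γ k w - winding γ k u =
      ∑ i ∈ Finset.range k, crossSign u w (γ i) →
      winding γ k u - winding γ k w = ∑ i ∈ Finset.range k, crossSign w u (γ i) := by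
    intro u w h
    simp only [crossSign_comm w u, Finset.sum_neg_distrib] at h
    linarith
  obtain ⟨rfl, rfl⟩ | ⟨rfl, rfl⟩ | ⟨rfl, rfl⟩ | ⟨rfl, rfl⟩ :
      (p = p' ∧ q + 1 = q') ∨ (p' = p ∧ q' + 1 = q) ∨ (p + 1 = p' ∧ q = q') ∨
        (p' + 1 = p ∧ q' = q) := by omega
  · exact winding_up_sub γ k p q
  · exact hswap _ _ (winding_up_sub γ k p' q')
  · exact hγ.winding_right_sub p q
  · exact hswap _ _ (hγ.winding_right_sub p' q')

lemma IsClosedWalk.winding_eq_of_not_crossesG (hγ : IsClosedWalk γ k) {a b : ℤ × ℤ}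
    (hab : ZAdj a b) (h : ∀ i < k, ¬ crossesG (γ i).edge a b) : winding γ k a = winding γ k b := by
  have hsum := hγ.winding_sub hab
  simp only [crossSign] at hsum
  rw [Finset.sum_eq_zero fun i hi => if_neg (h i (Finset.mem_range.1 hi))] at hsum
  omega

lemma IsClosedWalk.winding_ne_of_crossesG (hγ : IsClosedWalk γ k) {a b : ℤ × ℤ} {i : ℕ}
    (hi : i < k) (h : crossesG (γ i).edge a b)
    (huniq : ∀ j < k, crossesG (γ j).edge a b → γ j = γ i) : winding γ k a ≠ winding γ k b := by
  have hsum := hγ.winding_sub h.1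
  have hterm : ∀ j ∈ Finset.range k,
      crossSign a b (γ j) = if γ j = γ i then crossSign a b (γ i) else 0 := by
    intro j hj
    split_ifs with hji
    · rw [hji]
    · exact if_neg fun hj' => hji (huniq j (Finset.mem_range.1 hj) hj')
  rw [Finset.sum_congr rfl hterm, Finset.sum_ite, Finset.sum_const, Finset.sum_const_zero,
    add_zero, nsmul_eq_mul] at hsum
  have hcard : 0 < ((Finset.range k).filter fun j => γ j = γ i).card :=
    Finset.card_pos.2 ⟨i, Finset.mem_filter.2 ⟨Finset.mem_range.2 hi, rfl⟩⟩
  intro heq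
  rw [heq, sub_self] at hsum
  exact mul_ne_zero (by positivity) (crossSign_ne_zero h) hsum.symm

lemma IsClosedWalk.finite_setOf_winding_ne_zero (hγ : IsClosedWalk γ k) :
    {u | winding γ k u ≠ 0}.Finite := by
  set M : ℤ := ∑ i ∈ Finset.range k, ((γ i).tail.1.natAbs + (γ i).tail.2.natAbs : ℤ)
  have hM : ∀ i < k, ((γ i).tail.1.natAbs + (γ i).tail.2.natAbs : ℤ) ≤ M := fun i hi =>
    Finset.single_le_sum (f := fun i => ((γ i).tail.1.natAbs + (γ i).tail.2.natAbs : ℤ))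
      (fun _ _ => by positivity) (Finset.mem_range.2 hi)
  refine (Set.finite_Icc (-M - 2, -M - 2) (M + 2, M + 2)).subset fun u hu => ?_
  obtain ⟨i, hi, hcross⟩ : ∃ i < k, rayCrossing u (γ i) ≠ 0 := by
    by_contra! h
    exact hu (Finset.sum_eq_zero fun i hi => h i (Finset.mem_range.1 hi))
  obtain ⟨j, hj, hbelow⟩ : ∃ j < k, u.2 ≤ (γ j).tail.2 := by
    by_contra! h
    refine hu ?_
    have htel := Finset.sum_range_sub (fun i => if u.1 ≤ (γ i).tail.1 then (1 : ℤ) else 0) k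
    simp only [hγ.closed, sub_self, hγ.tail_succ] at htel
    rw [winding, Finset.sum_congr rfl fun i hi => rayCrossing_eq_sub_of_lt (h i
      (Finset.mem_range.1 hi)), htel]
  have h1 := mt rayCrossing_eq_zero_of_le hcross
  have h2 := mt rayCrossing_eq_zero_of_two_lt hcross
  have hMi := hM i hi
  have hMj := hM j hj
  rw [Set.mem_Icc, Prod.le_def, Prod.le_def]
  omega

variable {R : Set BEdge} {v w : ℤ × ℤ}

lemma IsClosedWalk.winding_eq_of_mem_gminusComp (hγ : IsClosedWalk γ k)
    (hR : ∀ i < k, (γ i).edge ∈ R) (hw : w ∈ GminusComp R v) :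
    winding γ k w = winding γ k v := by
  induction hw with
  | refl => rfl
  | tail _ h ih =>
    rw [← ih]
    exact (hγ.winding_eq_of_not_crossesG h.1 fun i hi hc => h.2 ⟨_, hR i hi, hc⟩).symm

lemma IsClosedWalk.winding_eq_zero_of_mem_gminusComp (hγ : IsClosedWalk γ k)
    (hR : ∀ i < k, (γ i).edge ∈ R) (hv : (GminusComp R v).Infinite) (hw : w ∈ GminusComp R v) :
    winding γ k w = 0 := by
  obtain ⟨w', hw', hw'0⟩ := (hv.sdiff hγ.finite_setOf_winding_ne_zero).nonempty
  rw [hγ.winding_eq_of_mem_gminusComp hR hw, ← hγ.winding_eq_of_mem_gminusComp hR hw']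
  simpa using hw'0

end Winding

section RightCycle

variable {ω : Config} {y : Dart} {k : ℕ}

structure IsRightCycle (ω : Config) (y : Dart) (k : ℕ) : Prop where
  white : IsWhiteFace y.tail
  present : y.IsPresent ω
  pos : 0 < k
  periodic : IsPeriodicPt (Dart.next ω) k y

def rightWalk (ω : Config) (y : Dart) (i : ℕ) : Dart := (Dart.next ω)^[i] y

lemma rightWalk_succ (ω : Config) (y : Dart) (i : ℕ) :
    rightWalk ω y (i + 1) = (rightWalk ω y i).next ω :=
  iterate_succ_apply' _ _ _

namespace IsRightCycle

lemma white_present (hω : Constrained ω) (hy : IsRightCycle ω y k) (i : ℕ) :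
    IsWhiteFace (rightWalk ω y i).tail ∧ (rightWalk ω y i).IsPresent ω := by
  induction i with
  | zero => exact ⟨hy.white, hy.present⟩
  | succ i ih =>
    rw [rightWalk_succ]
    exact ⟨Dart.isWhiteFace_head ih.1, Dart.isPresent_next hω ih.1 ih.2⟩

lemma state_rightCorner (hω : Constrained ω) (hy : IsRightCycle ω y k) (i : ℕ) :
    ω (rightWalk ω y i).rightCorner = ω y.rightCorner := by
  induction i with
  | zero => rfl
  | succ i ih =>
    obtain ⟨hw, hp⟩ := hy.white_present hω i
    rw [rightWalk_succ, ← (Dart.sameCluster_rightCorner_next hω hw hp).state_eq, ih]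

lemma isClosedWalk (hy : IsRightCycle ω y k) : IsClosedWalk (rightWalk ω y) k where
  tail_succ i := by rw [rightWalk_succ]; rfl
  closed := hy.periodic

lemma rightWalk_add (hy : IsRightCycle ω y k) (i : ℕ) :
    rightWalk ω y (i + k) = rightWalk ω y i := by
  rw [rightWalk, iterate_add_apply, hy.periodic.eq]; rfl

lemma exists_lt_rightWalk_eq (hy : IsRightCycle ω y k) (i : ℕ) :
    ∃ j < k, rightWalk ω y j = rightWalk ω y i :=
  ⟨i % k, Nat.mod_lt i hy.pos, hy.periodic.iterate_mod_apply i⟩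

lemma exists_head_eq_of_edge_eq (hy : IsRightCycle ω y k) {i : ℕ} {d : Dart}
    (h : (rightWalk ω y i).edge = d.edge) : ∃ j, (rightWalk ω y j).head = d.tail := by
  rcases Dart.eq_or_eq_reverse_of_edge_eq h with h | h
  · refine ⟨i + k - 1, ?_⟩
    rw [← h, ← hy.rightWalk_add i, show i + k = i + k - 1 + 1 by have := hy.pos; omega]
    exact (hy.isClosedWalk.tail_succ _).symm
  · exact ⟨i, by rw [h, Dart.head_reverse]⟩

/-- All right corners of the walk have the same state, so no edge is passed in both
directions. -/
lemma rightWalk_eq_of_edge_eq (hω : Constrained ω) (hy : IsRightCycle ω y k) {i j : ℕ}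
    (h : (rightWalk ω y i).edge = (rightWalk ω y j).edge) : rightWalk ω y i = rightWalk ω y j := by
  obtain ⟨hw, hp⟩ := hy.white_present hω j
  refine (Dart.eq_or_eq_reverse_of_edge_eq h).resolve_right fun hrev => ?_
  apply Dart.state_rightCorner_ne_reverse hω hw hp
  rw [← hrev, hy.state_rightCorner hω, hy.state_rightCorner hω]

lemma winding_ne_of_crossesG (hω : Constrained ω) (hy : IsRightCycle ω y k) {i : ℕ}
    {a b : ℤ × ℤ} (h : crossesG (rightWalk ω y i).edge a b) :
    winding (rightWalk ω y) k a ≠ winding (rightWalk ω y) k b := by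
  obtain ⟨i₀, hi₀, hi⟩ := hy.exists_lt_rightWalk_eq i
  rw [← hi] at h
  refine hy.isClosedWalk.winding_ne_of_crossesG hi₀ h fun j _ hj =>
    hy.rightWalk_eq_of_edge_eq hω ?_
  exact eq_of_crossesG_of_crossesG (Dart.isBlackFace_edge (hy.white_present hω j).1)
    (Dart.isBlackFace_edge (hy.white_present hω i₀).1) hj h

lemma winding_eq_of_forall_not_crossesG (hy : IsRightCycle ω y k) {a b : ℤ × ℤ}
    (hab : ZAdj a b) (h : ∀ i, ¬ crossesG (rightWalk ω y i).edge a b) :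
    winding (rightWalk ω y) k a = winding (rightWalk ω y) k b :=
  hy.isClosedWalk.winding_eq_of_not_crossesG hab fun i _ => h i

/-- The sides of the face of `c` are crossed only by `c` and by the other edge through that
face, which is absent. -/
lemma winding_eq_of_edgeIncVtx (hω : Constrained ω) (hy : IsRightCycle ω y k) {c : BEdge}
    (hc : contourCfg ω c = true) (hcw : ∀ i, (rightWalk ω y i).edge ≠ c) {u : ℤ × ℤ}
    (hu : EdgeIncVtx c u) : winding (rightWalk ω y) k u = winding (rightWalk ω y) k c.1 := by
  have step : ∀ u w, EdgeIncVtx c u → EdgeIncVtx c w → u = w ∨ ZAdj u w →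
      winding (rightWalk ω y) k u = winding (rightWalk ω y) k w := by
    rintro u w hu hw (rfl | huw)
    · rfl
    refine hy.winding_eq_of_forall_not_crossesG huw fun i hi => hcw i ?_
    obtain ⟨hwi, hpi⟩ := hy.white_present hω i
    exact eq_of_contourCfg_of_fst_eq hω hpi hc (fst_eq_of_crossesG_of_edgeIncVtx
      (Dart.isBlackFace_edge hwi) (isBlackFace_of_contourCfg hc) hi hu hw)
  obtain ⟨⟨m, n⟩, t⟩ := c
  obtain ⟨p, q⟩ := u
  have hpn : EdgeIncVtx ((m, n), t) (p, n) := ⟨hu.1, Or.inl rfl⟩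
  refine (step _ _ hu hpn ?_).trans (step _ _ hpn ⟨Or.inl rfl, Or.inl rfl⟩ ?_)
  · rcases hu.2 with rfl | rfl
    exacts [Or.inl rfl, Or.inr (by simp [zAdj_iff])]
  · rcases hu.1 with rfl | rfl
    exacts [Or.inl rfl, Or.inr (by simp [zAdj_iff])]

lemma winding_rightCorner_eq_of_not_visited (hω : Constrained ω) (hy : IsRightCycle ω y k)
    {V : ℤ × ℤ} (hV : IsWhiteFace V) (hnot : ∀ i, (rightWalk ω y i).head ≠ V) (α β : Dir) :
    winding (rightWalk ω y) k (Dart.rightCorner ⟨V, α⟩) =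
      winding (rightWalk ω y) k (Dart.rightCorner ⟨V, β⟩) := by
  have step : ∀ α : Dir, winding (rightWalk ω y) k (Dart.rightCorner ⟨V, α⟩) =
      winding (rightWalk ω y) k (Dart.rightCorner ⟨V, α.turnLeft⟩) := by
    intro α
    have hcross := (⟨V, α⟩ : Dart).crossesG_rightCorner_leftCorner
    refine hy.winding_eq_of_forall_not_crossesG hcross.1 fun i hi => ?_
    obtain ⟨j, hj⟩ := hy.exists_head_eq_of_edge_eq (eq_of_crossesG_of_crossesG
      (Dart.isBlackFace_edge (hy.white_present hω i).1) (Dart.isBlackFace_edge hV) hi hcross)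
    exact hnot j hj
  rcases Dir.eq_or_eq_turnRight_or_eq_turnLeft_or_eq_reverse β α with rfl | rfl | rfl | rfl
  · rfl
  · have h := ((step α).trans (step α.turnLeft)).trans (step α.turnLeft.turnLeft)
    simpa using h
  · exact step α
  · simpa using (step α).trans (step α.turnLeft)

/-- At a face visited by the walk, the walk turns right; every further present edge there lies
on its left, where the winding number is nonzero. -/
lemma exists_winding_ne_zero_of_visited (hω : Constrained ω) (hy : IsRightCycle ω y k)
    (hzero : ∀ i, winding (rightWalk ω y) k (rightWalk ω y i).rightCorner = 0) (j : ℕ) {β : Dir}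
    (hβ : Dart.IsPresent ω ⟨(rightWalk ω y j).head, β⟩)
    (hβw : ∀ i, (rightWalk ω y i).edge ≠ (⟨(rightWalk ω y j).head, β⟩ : Dart).edge) :
    ∃ u, EdgeIncVtx (⟨(rightWalk ω y j).head, β⟩ : Dart).edge u ∧
      winding (rightWalk ω y) k u ≠ 0 := by
  set a := rightWalk ω y j with ha_def
  obtain ⟨ha, hpa⟩ := hy.white_present hω j
  have hnext : a.next ω = rightWalk ω y (j + 1) := (rightWalk_succ ω y j).symm
  have hrev : β ≠ a.dir.reverse := fun h => hβw j (by rw [h]; exact (Dart.edge_reverse a).symm)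
  have hrot : (a.next ω).dir = a.dir.turnRight :=
    Dart.dir_next_eq_turnRight hω ha hpa hβ hrev fun h => hβw (j + 1) (by rw [← hnext, h]; rfl)
  have hleft : winding (rightWalk ω y) k (a.next ω).leftCorner ≠ 0 := by
    have h := hy.winding_ne_of_crossesG hω (i := j + 1) (Dart.crossesG_rightCorner_leftCorner _)
    rw [hzero, ← hnext] at h
    exact h.symm
  have hright : winding (rightWalk ω y) k a.reverse.rightCorner ≠ 0 := by
    have h := hy.winding_ne_of_crossesG hω (i := j) (a := a.reverse.rightCorner)
      (b := a.reverse.leftCorner) (by rw [← ha_def, ← a.edge_reverse]; exact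
        a.reverse.crossesG_rightCorner_leftCorner)
    have hl : a.reverse.leftCorner = (a.next ω).rightCorner := by
      rw [Dart.leftCorner_reverse, ← hrot]; rfl
    rw [hl, hnext, hzero] at h
    exact h
  rcases Dir.eq_or_eq_turnRight_or_eq_turnLeft_or_eq_reverse β a.dir with rfl | rfl | rfl | rfl
  · refine ⟨_, Dart.edgeIncVtx_rightCorner _, ?_⟩
    convert hleft using 2
    rw [Dart.leftCorner, hrot]
    simp
  · exact absurd (by rw [← hnext, ← hrot]; rfl) (hβw (j + 1))
  · refine ⟨_, Dart.edgeIncVtx_leftCorner _, ?_⟩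
    convert hright using 2
    simp [Dart.leftCorner, Dart.reverse]
  · exact absurd rfl hrev

lemma mem_or_exists_winding_ne_zero (hω : Constrained ω) (hy : IsRightCycle ω y k)
    (hzero : ∀ i, winding (rightWalk ω y) k (rightWalk ω y i).rightCorner = 0) {g : BEdge}
    (hg : Relation.ReflTransGen
      (fun a b => contourCfg ω a = true ∧ contourCfg ω b = true ∧ shareEnd a b) y.edge g) :
    (∃ i, (rightWalk ω y i).edge = g) ∨ ∃ u, EdgeIncVtx g u ∧ winding (rightWalk ω y) k u ≠ 0 := by
  induction hg with
  | refl => exact Or.inl ⟨0, rfl⟩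
  | tail _ hbc ih =>
    obtain ⟨hb, hc, hshare⟩ := hbc
    obtain ⟨⟨V, α⟩, ⟨V', β⟩, hV, rfl, rfl, rfl⟩ := exists_tail_eq_of_shareEnd
      (isBlackFace_of_contourCfg hb) (isBlackFace_of_contourCfg hc) hshare
    by_cases hcw : ∃ i, (rightWalk ω y i).edge = (⟨V', β⟩ : Dart).edge
    · exact Or.inl hcw
    push Not at hcw
    right
    by_cases hvis : ∃ j, (rightWalk ω y j).head = V'
    · obtain ⟨j, rfl⟩ := hvis
      exact hy.exists_winding_ne_zero_of_visited hω hzero j hc hcw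
    push Not at hvis
    have hbw : ∀ i, (rightWalk ω y i).edge ≠ (⟨V', α⟩ : Dart).edge := fun i h =>
      let ⟨j, hj⟩ := hy.exists_head_eq_of_edge_eq h
      hvis j hj
    obtain ⟨u, hu, hWu⟩ := ih.resolve_left fun ⟨i, hi⟩ => hbw i hi
    refine ⟨_, Dart.edgeIncVtx_rightCorner _, ?_⟩
    rwa [← hy.winding_rightCorner_eq_of_not_visited hω hV hvis α β,
      hy.winding_eq_of_edgeIncVtx hω hb hbw (Dart.edgeIncVtx_rightCorner _),
      ← hy.winding_eq_of_edgeIncVtx hω hb hbw hu]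

lemma finite_of_isContour (hω : Constrained ω) (hy : IsRightCycle ω y k) {C : Set BEdge}
    (hC : IsContour ω C) (hyC : y.edge ∈ C)
    (hzero : ∀ i, winding (rightWalk ω y) k (rightWalk ω y i).rightCorner = 0) : C.Finite := by
  have hwalk : (Set.range fun i => (rightWalk ω y i).edge).Finite := by
    refine ((Set.finite_Iio k).image fun i => (rightWalk ω y i).edge).subset ?_
    rintro _ ⟨i, rfl⟩
    obtain ⟨j, hj, hji⟩ := hy.exists_lt_rightWalk_eq i
    exact ⟨j, hj, congrArg Dart.edge hji⟩
  refine (hwalk.union (hy.isClosedWalk.finite_setOf_winding_ne_zero.biUnion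
    fun u _ => finite_setOf_edgeIncVtx u)).subset fun g hg => ?_
  rcases hy.mem_or_exists_winding_ne_zero hω hzero (hC.reflTransGen hyC hg) with h | ⟨u, hu, hW⟩
  · exact Or.inl h
  · exact Or.inr (Set.mem_biUnion hW hu)

end IsRightCycle

end RightCycle

section BorderDarts

variable {ω : Config} {C : Set BEdge} {x : ℤ × ℤ}

def borderDarts (ω : Config) (C : Set BEdge) (x : ℤ × ℤ) : Set Dart :=
  {d | IsWhiteFace d.tail ∧ d.IsPresent ω ∧ d.edge ∈ C ∧ SameCluster ω x d.rightCorner}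

lemma mapsTo_next_borderDarts (hω : Constrained ω) (hC : IsContour ω C) :
    Set.MapsTo (Dart.next ω) (borderDarts ω C x) (borderDarts ω C x) := by
  rintro d ⟨hd, hp, hdC, hx⟩
  have hp' := Dart.isPresent_next hω hd hp
  refine ⟨Dart.isWhiteFace_head hd, hp', ?_, hx.trans (Dart.sameCluster_rightCorner_next hω hd hp)⟩
  obtain ⟨e₀, -, rfl⟩ := hC
  exact hdC.tail ⟨hp, hp', Dart.shareEnd_edge_of_tail_eq_head rfl⟩

lemma finite_borderDarts (hfin : (cluster ω x).Finite) : (borderDarts ω C x).Finite :=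
  ((hfin.prod Set.finite_univ).preimage Dart.injective_rightCorner_dir.injOn).subset
    fun _ hd => ⟨hd.2.2.2, trivial⟩

lemma IsContour.finite_of_mem_periodicPts (hω : Constrained ω) (hC : IsContour ω C) {v : ℤ × ℤ}
    (hv : (GminusComp C v).Infinite) (hx : x ∈ GminusComp C v) {y : Dart}
    (hy : y ∈ borderDarts ω C x) (hper : y ∈ periodicPts (Dart.next ω)) : C.Finite := by
  obtain ⟨k, hk, hperk⟩ := mem_periodicPts.1 hper
  have hcyc : IsRightCycle ω y k := ⟨hy.1, hy.2.1, hk, hperk⟩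
  have hmem : ∀ i, rightWalk ω y i ∈ borderDarts ω C x := fun i =>
    (mapsTo_next_borderDarts hω hC).iterate i hy
  refine hcyc.finite_of_isContour hω hC hy.2.2.1 fun i => ?_
  exact hcyc.isClosedWalk.winding_eq_zero_of_mem_gminusComp (fun i _ => (hmem i).2.2.1) hv
    (mem_gminusComp_of_sameCluster hω hC hx (hmem i).2.2.2)

end BorderDarts

/-- Lemma 2.7 of the paper: every infinite component of `G ∖ C∞`
contains an infinite cluster incident to the infinite contour `C∞`. -/
theorem infinite_component_contains_incident_infinite_cluster
    (ω : Config) (hω : Constrained ω) (C : Set BEdge)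
    (hC : IsContour ω C) (hCi : C.Infinite)
    (v : ℤ × ℤ) (hv : (GminusComp C v).Infinite) :
    ∃ D, IsCluster ω D ∧ D.Infinite ∧ D ⊆ GminusComp C v ∧ ContourIncCluster C D := by
  obtain ⟨x, hxK, e₀, he₀C, hx⟩ := exists_mem_gminusComp_edgeIncVtx hC.nonempty v
  refine ⟨cluster ω x, ⟨x, rfl⟩, fun hfin => hCi ?_,
    fun w hw => mem_gminusComp_of_sameCluster hω hC hxK hw, e₀, he₀C, x, .refl, hx⟩
  have he₀ := hC.contourCfg_of_mem he₀C
  obtain ⟨d, hd, rfl, hxd⟩ := Dart.exists_sameCluster_rightCorner hω he₀ hx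
  obtain ⟨y, hy, hper⟩ := exists_mem_periodicPts_of_mapsTo (finite_borderDarts hfin)
    (mapsTo_next_borderDarts hω hC) (⟨hd, he₀, he₀C, hxd⟩ : d ∈ borderDarts ω C x)
  exact hC.finite_of_mem_periodicPts hω hv hxK hy hper

end CP

end
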